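/- Telescoping identity for the consistency-error term of the splitting scheme: for all smooth functions a, b, c on the closed box B vanishing on the boundary ∂B, writing w = a − 2b + c, one has (1/2) ( (Δ − Δ̂) w, a − b )_ω = (1/4) [ ‖∂_θ(a−b)‖²_{ω1} − ‖∂_θ(b−c)‖²_{ω1} + ‖∂_θ w‖²_{ω1} ] + (1/4) [ ‖∂_φ(a−b)‖²_{ω2} − ‖∂_φ(b−c)‖²_{ω2} + ‖∂_φ w‖²_{ω2} ], where ω1 = (r²/R1² − 1) sin θ ≥ 0 and ω2 = r² sin θ ( (R1² sin² θ1)^{−1} − (r² sin² θ)^{−1} ) ≥ 0. -/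

import Mathlib

open MeasureTheory Real Set

noncomputable section

/-- Partial derivative in the radial direction. -/
def pr (u : ℝ → ℝ → ℝ → ℝ) (r θ φ : ℝ) : ℝ := deriv (fun s => u s θ φ) r

/-- Partial derivative in the θ direction. -/
def pt (u : ℝ → ℝ → ℝ → ℝ) (r θ φ : ℝ) : ℝ := deriv (fun s => u r s φ) θ

/-- Partial derivative in the φ direction. -/
def pp (u : ℝ → ℝ → ℝ → ℝ) (r θ φ : ℝ) : ℝ := deriv (fun s => u r θ s) φ

/-- `D_rr u = r⁻² ∂_r (r² ∂_r u)`. -/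
def Drr (u : ℝ → ℝ → ℝ → ℝ) : ℝ → ℝ → ℝ → ℝ := fun r θ φ =>
  (1 / r ^ 2) * pr (fun r' θ' φ' => r' ^ 2 * pr u r' θ' φ') r θ φ

/-- `D_θθ u = (r² sin θ)⁻¹ ∂_θ (sin θ ∂_θ u)`. -/
def Dtt (u : ℝ → ℝ → ℝ → ℝ) : ℝ → ℝ → ℝ → ℝ := fun r θ φ =>
  (1 / (r ^ 2 * Real.sin θ)) * pt (fun r' θ' φ' => Real.sin θ' * pt u r' θ' φ') r θ φ

/-- Modified operator `D̂_θθ u = (R1² sin θ)⁻¹ ∂_θ (sin θ ∂_θ u)`. -/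
def Dhtt (R1 : ℝ) (u : ℝ → ℝ → ℝ → ℝ) : ℝ → ℝ → ℝ → ℝ := fun r θ φ =>
  (1 / (R1 ^ 2 * Real.sin θ)) * pt (fun r' θ' φ' => Real.sin θ' * pt u r' θ' φ') r θ φ

/-- `D_φφ u = (r² sin² θ)⁻¹ ∂²_φ u`. -/
def Dpp (u : ℝ → ℝ → ℝ → ℝ) : ℝ → ℝ → ℝ → ℝ := fun r θ φ =>
  (1 / (r ^ 2 * Real.sin θ ^ 2)) * pp (pp u) r θ φ

/-- Modified operator `D̂_φφ u = (R1² sin² θ1)⁻¹ ∂²_φ u`. -/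
def Dhpp (R1 θone : ℝ) (u : ℝ → ℝ → ℝ → ℝ) : ℝ → ℝ → ℝ → ℝ := fun r θ φ =>
  (1 / (R1 ^ 2 * Real.sin θone ^ 2)) * pp (pp u) r θ φ

/-- Spherical Laplacian `Δ = D_rr + D_θθ + D_φφ`. -/
def lap (u : ℝ → ℝ → ℝ → ℝ) : ℝ → ℝ → ℝ → ℝ := fun r θ φ =>
  Drr u r θ φ + Dtt u r θ φ + Dpp u r θ φ

/-- Modified Laplacian `Δ̂ = D_rr + D̂_θθ + D̂_φφ`. -/
def laph (R1 θone : ℝ) (u : ℝ → ℝ → ℝ → ℝ) : ℝ → ℝ → ℝ → ℝ := fun r θ φ =>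
  Drr u r θ φ + Dhtt R1 u r θ φ + Dhpp R1 θone u r θ φ

/-- Weighted inner product `(u, v)_ω = ∫_B u v r² sin θ dr dθ dφ`. -/
def ipw (R1 R2 θ1 θ2 φ1 φ2 : ℝ) (u v : ℝ → ℝ → ℝ → ℝ) : ℝ :=
  ∫ r in Icc R1 R2, ∫ θ in Icc θ1 θ2, ∫ φ in Icc φ1 φ2,
    u r θ φ * v r θ φ * (r ^ 2 * Real.sin θ)

/-- Squared norm with a general nonnegative weight `w(r, θ)`:
`‖v‖²_w = ∫_B w v² dr dθ dφ`. -/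
def wnorm (R1 R2 θ1 θ2 φ1 φ2 : ℝ) (w : ℝ → ℝ → ℝ) (v : ℝ → ℝ → ℝ → ℝ) : ℝ :=
  ∫ r in Icc R1 R2, ∫ θ in Icc θ1 θ2, ∫ φ in Icc φ1 φ2,
    w r θ * (v r θ φ) ^ 2

/-- Spherical gradient energy `‖∇u‖²_ω`. -/
def gradE (R1 R2 θ1 θ2 φ1 φ2 : ℝ) (u : ℝ → ℝ → ℝ → ℝ) : ℝ :=
  ∫ r in Icc R1 R2, ∫ θ in Icc θ1 θ2, ∫ φ in Icc φ1 φ2,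
    ((pr u r θ φ) ^ 2 + (1 / r ^ 2) * (pt u r θ φ) ^ 2
      + (1 / (r * Real.sin θ) ^ 2) * (pp u r θ φ) ^ 2) * (r ^ 2 * Real.sin θ)

/-- The closed coordinate box `B = [R1,R2] × [θ1,θ2] × [φ1,φ2]`. -/
def SBox (R1 R2 θ1 θ2 φ1 φ2 : ℝ) : Set (ℝ × ℝ × ℝ) :=
  Icc R1 R2 ×ˢ Icc θ1 θ2 ×ˢ Icc φ1 φ2

/-- `u` is smooth (C^∞) up to the boundary of the closed box. -/
def SmoothOnBox (R1 R2 θ1 θ2 φ1 φ2 : ℝ) (u : ℝ → ℝ → ℝ → ℝ) : Prop :=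
  ContDiffOn ℝ (⊤ : ℕ∞) (fun p : ℝ × ℝ × ℝ => u p.1 p.2.1 p.2.2) (SBox R1 R2 θ1 θ2 φ1 φ2)

/-- `u` vanishes on the boundary `∂B` of the closed box. -/
def VanishOnBdry (R1 R2 θ1 θ2 φ1 φ2 : ℝ) (u : ℝ → ℝ → ℝ → ℝ) : Prop :=
  ∀ p ∈ frontier (SBox R1 R2 θ1 θ2 φ1 φ2), u p.1 p.2.1 p.2.2 = 0

namespace TCEI
variable {R1 R2 θ1 θ2 φ1 φ2 : ℝ}
def P3 (u : ℝ → ℝ → ℝ → ℝ) : ℝ × ℝ × ℝ → ℝ := fun p => u p.1 p.2.1 p.2.2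
def Bx (R1 R2 θ1 θ2 φ1 φ2 : ℝ) : Set (ℝ × ℝ × ℝ) := Icc R1 R2 ×ˢ Icc θ1 θ2 ×ˢ Icc φ1 φ2
def dth (R1 R2 θ1 θ2 φ1 φ2 : ℝ) (u : ℝ → ℝ → ℝ → ℝ) : ℝ → ℝ → ℝ → ℝ := fun r θ φ =>
  fderivWithin ℝ (P3 u) (Bx R1 R2 θ1 θ2 φ1 φ2) (r, θ, φ) (0, 1, 0)
def dph (R1 R2 θ1 θ2 φ1 φ2 : ℝ) (u : ℝ → ℝ → ℝ → ℝ) : ℝ → ℝ → ℝ → ℝ := fun r θ φ =>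
  fderivWithin ℝ (P3 u) (Bx R1 R2 θ1 θ2 φ1 φ2) (r, θ, φ) (0, 0, 1)

lemma uD (hRR : R1 < R2) (hθθ : θ1 < θ2) (hφ : φ1 < φ2) :
    UniqueDiffOn ℝ (Bx R1 R2 θ1 θ2 φ1 φ2) :=
  (uniqueDiffOn_Icc hRR).prod ((uniqueDiffOn_Icc hθθ).prod (uniqueDiffOn_Icc hφ))

lemma measurable_Bx : MeasurableSet (Bx R1 R2 θ1 θ2 φ1 φ2) :=
  measurableSet_Icc.prod (measurableSet_Icc.prod measurableSet_Icc)

lemma smooth_dth (hRR : R1 < R2) (hθθ : θ1 < θ2) (hφ : φ1 < φ2) {u : ℝ → ℝ → ℝ → ℝ}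
    (hu : ContDiffOn ℝ (⊤ : ℕ∞) (P3 u) (Bx R1 R2 θ1 θ2 φ1 φ2)) :
    ContDiffOn ℝ (⊤ : ℕ∞) (P3 (dth R1 R2 θ1 θ2 φ1 φ2 u)) (Bx R1 R2 θ1 θ2 φ1 φ2) := by
  have : P3 (dth R1 R2 θ1 θ2 φ1 φ2 u)
      = fun p => fderivWithin ℝ (P3 u) (Bx R1 R2 θ1 θ2 φ1 φ2) p (0, 1, 0) := by
    funext p; simp [P3, dth]
  rw [this]
  exact (hu.fderivWithin (uD hRR hθθ hφ) (by norm_num)).clm_apply contDiffOn_const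

lemma smooth_dph (hRR : R1 < R2) (hθθ : θ1 < θ2) (hφ : φ1 < φ2) {u : ℝ → ℝ → ℝ → ℝ}
    (hu : ContDiffOn ℝ (⊤ : ℕ∞) (P3 u) (Bx R1 R2 θ1 θ2 φ1 φ2)) :
    ContDiffOn ℝ (⊤ : ℕ∞) (P3 (dph R1 R2 θ1 θ2 φ1 φ2 u)) (Bx R1 R2 θ1 θ2 φ1 φ2) := by
  have : P3 (dph R1 R2 θ1 θ2 φ1 φ2 u)
      = fun p => fderivWithin ℝ (P3 u) (Bx R1 R2 θ1 θ2 φ1 φ2) p (0, 0, 1) := by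
    funext p; simp [P3, dph]
  rw [this]
  exact (hu.fderivWithin (uD hRR hθθ hφ) (by norm_num)).clm_apply contDiffOn_const

lemma slice_t {u : ℝ → ℝ → ℝ → ℝ}
    (hu : ContDiffOn ℝ (⊤ : ℕ∞) (P3 u) (Bx R1 R2 θ1 θ2 φ1 φ2)) {r θ φ : ℝ}
    (hr : r ∈ Icc R1 R2) (hθ : θ ∈ Icc θ1 θ2) (hφ' : φ ∈ Icc φ1 φ2) :
    HasDerivWithinAt (fun s => u r s φ) (dth R1 R2 θ1 θ2 φ1 φ2 u r θ φ) (Icc θ1 θ2) θ := by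
  have hp : (r, θ, φ) ∈ Bx R1 R2 θ1 θ2 φ1 φ2 := ⟨hr, hθ, hφ'⟩
  have hd := (hu.differentiableOn (by norm_num) _ hp).hasFDerivWithinAt
  have hγ : HasDerivWithinAt (fun s : ℝ => ((r, s, φ) : ℝ × ℝ × ℝ)) ((0 : ℝ), (1 : ℝ), (0 : ℝ))
      (Icc θ1 θ2) θ :=
    (((hasDerivAt_const θ r).prodMk ((hasDerivAt_id θ).prodMk (hasDerivAt_const θ φ)))).hasDerivWithinAt
  exact hd.comp_hasDerivWithinAt θ hγ (fun s hs => (⟨hr, hs, hφ'⟩ : (r, s, φ) ∈ Bx R1 R2 θ1 θ2 φ1 φ2))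

lemma slice_p {u : ℝ → ℝ → ℝ → ℝ}
    (hu : ContDiffOn ℝ (⊤ : ℕ∞) (P3 u) (Bx R1 R2 θ1 θ2 φ1 φ2)) {r θ φ : ℝ}
    (hr : r ∈ Icc R1 R2) (hθ : θ ∈ Icc θ1 θ2) (hφ' : φ ∈ Icc φ1 φ2) :
    HasDerivWithinAt (fun s => u r θ s) (dph R1 R2 θ1 θ2 φ1 φ2 u r θ φ) (Icc φ1 φ2) φ := by
  have hp : (r, θ, φ) ∈ Bx R1 R2 θ1 θ2 φ1 φ2 := ⟨hr, hθ, hφ'⟩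
  have hd := (hu.differentiableOn (by norm_num) _ hp).hasFDerivWithinAt
  have hγ : HasDerivWithinAt (fun s : ℝ => ((r, θ, s) : ℝ × ℝ × ℝ)) ((0 : ℝ), (0 : ℝ), (1 : ℝ))
      (Icc φ1 φ2) φ :=
    (((hasDerivAt_const φ r).prodMk ((hasDerivAt_const φ θ).prodMk (hasDerivAt_id φ)))).hasDerivWithinAt
  exact hd.comp_hasDerivWithinAt φ hγ (fun s hs => (⟨hr, hθ, hs⟩ : (r, θ, s) ∈ Bx R1 R2 θ1 θ2 φ1 φ2))

lemma pt_eq {u : ℝ → ℝ → ℝ → ℝ}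
    (hu : ContDiffOn ℝ (⊤ : ℕ∞) (P3 u) (Bx R1 R2 θ1 θ2 φ1 φ2)) {r θ φ : ℝ}
    (hr : r ∈ Icc R1 R2) (hθ : θ ∈ Ioo θ1 θ2) (hφ' : φ ∈ Icc φ1 φ2) :
    pt u r θ φ = dth R1 R2 θ1 θ2 φ1 φ2 u r θ φ :=
  ((slice_t hu hr (Ioo_subset_Icc_self hθ) hφ').hasDerivAt (Icc_mem_nhds hθ.1 hθ.2)).deriv

lemma pp_eq {u : ℝ → ℝ → ℝ → ℝ}
    (hu : ContDiffOn ℝ (⊤ : ℕ∞) (P3 u) (Bx R1 R2 θ1 θ2 φ1 φ2)) {r θ φ : ℝ}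
    (hr : r ∈ Icc R1 R2) (hθ : θ ∈ Icc θ1 θ2) (hφ' : φ ∈ Ioo φ1 φ2) :
    pp u r θ φ = dph R1 R2 θ1 θ2 φ1 φ2 u r θ φ :=
  ((slice_p hu hr hθ (Ioo_subset_Icc_self hφ')).hasDerivAt (Icc_mem_nhds hφ'.1 hφ'.2)).deriv

lemma smooth_w2 (hRR : R1 < R2) (hθθ : θ1 < θ2) (hφ : φ1 < φ2) {u : ℝ → ℝ → ℝ → ℝ}
    (hu : ContDiffOn ℝ (⊤ : ℕ∞) (P3 u) (Bx R1 R2 θ1 θ2 φ1 φ2)) :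
    ContDiffOn ℝ (⊤ : ℕ∞)
      (P3 (fun r θ φ => Real.sin θ * dth R1 R2 θ1 θ2 φ1 φ2 u r θ φ)) (Bx R1 R2 θ1 θ2 φ1 φ2) := by
  have h1 : ContDiffOn ℝ (⊤ : ℕ∞) (fun p : ℝ × ℝ × ℝ => Real.sin p.2.1)
      (Bx R1 R2 θ1 θ2 φ1 φ2) :=
    (Real.contDiff_sin.comp (contDiff_fst.comp contDiff_snd)).contDiffOn
  exact h1.mul (smooth_dth hRR hθθ hφ hu)

lemma pt2_eq (hRR : R1 < R2) (hθθ : θ1 < θ2) (hφ : φ1 < φ2) {u : ℝ → ℝ → ℝ → ℝ}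
    (hu : ContDiffOn ℝ (⊤ : ℕ∞) (P3 u) (Bx R1 R2 θ1 θ2 φ1 φ2)) {r θ φ : ℝ}
    (hr : r ∈ Icc R1 R2) (hθ : θ ∈ Ioo θ1 θ2) (hφ' : φ ∈ Icc φ1 φ2) :
    pt (fun r' θ' φ' => Real.sin θ' * pt u r' θ' φ') r θ φ
      = dth R1 R2 θ1 θ2 φ1 φ2 (fun r' θ' φ' => Real.sin θ' * dth R1 R2 θ1 θ2 φ1 φ2 u r' θ' φ') r θ φ := by
  have heq : (fun s => Real.sin s * pt u r s φ)
      =ᶠ[nhds θ] (fun s => Real.sin s * dth R1 R2 θ1 θ2 φ1 φ2 u r s φ) := by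
    filter_upwards [Ioo_mem_nhds hθ.1 hθ.2] with s hs
    rw [pt_eq hu hr hs hφ']
  rw [pt, heq.deriv_eq]
  exact pt_eq (smooth_w2 hRR hθθ hφ hu) hr hθ hφ'

lemma pp2_eq {u : ℝ → ℝ → ℝ → ℝ}
    (hu : ContDiffOn ℝ (⊤ : ℕ∞) (P3 u) (Bx R1 R2 θ1 θ2 φ1 φ2))
    (hdu : ContDiffOn ℝ (⊤ : ℕ∞) (P3 (dph R1 R2 θ1 θ2 φ1 φ2 u)) (Bx R1 R2 θ1 θ2 φ1 φ2))
    {r θ φ : ℝ}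
    (hr : r ∈ Icc R1 R2) (hθ : θ ∈ Icc θ1 θ2) (hφ' : φ ∈ Ioo φ1 φ2) :
    pp (pp u) r θ φ = dph R1 R2 θ1 θ2 φ1 φ2 (dph R1 R2 θ1 θ2 φ1 φ2 u) r θ φ := by
  have heq : (fun s => pp u r θ s) =ᶠ[nhds φ] (fun s => dph R1 R2 θ1 θ2 φ1 φ2 u r θ s) := by
    filter_upwards [Ioo_mem_nhds hφ'.1 hφ'.2] with s hs
    exact pp_eq hu hr hθ hs
  rw [pp, heq.deriv_eq]
  exact pp_eq hdu hr hθ hφ'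

lemma interior_Bx : interior (Bx R1 R2 θ1 θ2 φ1 φ2) = Ioo R1 R2 ×ˢ Ioo θ1 θ2 ×ˢ Ioo φ1 φ2 := by
  rw [Bx, interior_prod_eq, interior_prod_eq, interior_Icc, interior_Icc, interior_Icc]

lemma frontier_Bx_sub :
    (Bx R1 R2 θ1 θ2 φ1 φ2 \ interior (Bx R1 R2 θ1 θ2 φ1 φ2)) ⊆ frontier (SBox R1 R2 θ1 θ2 φ1 φ2) := by
  have hcl : IsClosed (Bx R1 R2 θ1 θ2 φ1 φ2) :=
    (isClosed_Icc.prod (isClosed_Icc.prod isClosed_Icc))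
  have : frontier (SBox R1 R2 θ1 θ2 φ1 φ2) = frontier (Bx R1 R2 θ1 θ2 φ1 φ2) := rfl
  rw [this, hcl.frontier_eq]

lemma vanish_t {v : ℝ → ℝ → ℝ → ℝ} (hv0 : VanishOnBdry R1 R2 θ1 θ2 φ1 φ2 v)
    (hθθ : θ1 ≤ θ2) {r φ : ℝ} (hr : r ∈ Icc R1 R2) (hφ' : φ ∈ Icc φ1 φ2) :
    v r θ1 φ = 0 ∧ v r θ2 φ = 0 := by
  constructor
  · exact hv0 (r, θ1, φ) (frontier_Bx_sub ⟨⟨hr, ⟨le_refl _, hθθ⟩, hφ'⟩, by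
      rw [interior_Bx]; rintro ⟨-, h2, -⟩; exact lt_irrefl θ1 h2.1⟩)
  · exact hv0 (r, θ2, φ) (frontier_Bx_sub ⟨⟨hr, ⟨hθθ, le_refl _⟩, hφ'⟩, by
      rw [interior_Bx]; rintro ⟨-, h2, -⟩; exact lt_irrefl θ2 h2.2⟩)

lemma vanish_p {v : ℝ → ℝ → ℝ → ℝ} (hv0 : VanishOnBdry R1 R2 θ1 θ2 φ1 φ2 v)
    (hφ : φ1 ≤ φ2) {r θ : ℝ} (hr : r ∈ Icc R1 R2) (hθ : θ ∈ Icc θ1 θ2) :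
    v r θ φ1 = 0 ∧ v r θ φ2 = 0 := by
  constructor
  · exact hv0 (r, θ, φ1) (frontier_Bx_sub ⟨⟨hr, hθ, ⟨le_refl _, hφ⟩⟩, by
      rw [interior_Bx]; rintro ⟨-, -, h3⟩; exact lt_irrefl φ1 h3.1⟩)
  · exact hv0 (r, θ, φ2) (frontier_Bx_sub ⟨⟨hr, hθ, ⟨hφ, le_refl _⟩⟩, by
      rw [interior_Bx]; rintro ⟨-, -, h3⟩; exact lt_irrefl φ2 h3.2⟩)

lemma contT {F : ℝ × ℝ × ℝ → ℝ} (hF : ContinuousOn F (Bx R1 R2 θ1 θ2 φ1 φ2)) {r φ : ℝ}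
    (hr : r ∈ Icc R1 R2) (hφ' : φ ∈ Icc φ1 φ2) :
    ContinuousOn (fun θ => F (r, θ, φ)) (Icc θ1 θ2) :=
  hF.comp ((continuous_const.prodMk (continuous_id.prodMk continuous_const)).continuousOn)
    (fun s hs => ⟨hr, hs, hφ'⟩)

lemma contP {F : ℝ × ℝ × ℝ → ℝ} (hF : ContinuousOn F (Bx R1 R2 θ1 θ2 φ1 φ2)) {r θ : ℝ}
    (hr : r ∈ Icc R1 R2) (hθ : θ ∈ Icc θ1 θ2) :
    ContinuousOn (fun φ => F (r, θ, φ)) (Icc φ1 φ2) :=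
  hF.comp ((continuous_const.prodMk (continuous_const.prodMk continuous_id)).continuousOn)
    (fun s hs => ⟨hr, hθ, hs⟩)

lemma ibp_theta (hRR : R1 < R2) (hθθ : θ1 < θ2) (hφv : φ1 < φ2) {w v : ℝ → ℝ → ℝ → ℝ}
    (hv : ContDiffOn ℝ (⊤ : ℕ∞) (P3 v) (Bx R1 R2 θ1 θ2 φ1 φ2))
    (hw2 : ContDiffOn ℝ (⊤ : ℕ∞)
      (P3 (fun r θ φ => Real.sin θ * dth R1 R2 θ1 θ2 φ1 φ2 w r θ φ)) (Bx R1 R2 θ1 θ2 φ1 φ2))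
    (hv0 : VanishOnBdry R1 R2 θ1 θ2 φ1 φ2 v)
    {r φ : ℝ} (hr : r ∈ Icc R1 R2) (hφ' : φ ∈ Icc φ1 φ2) :
    ∫ θ in Icc θ1 θ2,
        dth R1 R2 θ1 θ2 φ1 φ2 (fun r' θ' φ' => Real.sin θ' * dth R1 R2 θ1 θ2 φ1 φ2 w r' θ' φ') r θ φ
          * v r θ φ
      = - ∫ θ in Icc θ1 θ2,
          Real.sin θ * dth R1 R2 θ1 θ2 φ1 φ2 w r θ φ * dth R1 R2 θ1 θ2 φ1 φ2 v r θ φ := by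
  set w2 : ℝ → ℝ → ℝ → ℝ := fun r' θ' φ' => Real.sin θ' * dth R1 R2 θ1 θ2 φ1 φ2 w r' θ' φ' with hw2def
  set F : ℝ → ℝ := fun θ => w2 r θ φ * v r θ φ with hF
  set G1 : ℝ → ℝ := fun θ => dth R1 R2 θ1 θ2 φ1 φ2 w2 r θ φ * v r θ φ with hG1
  set G2 : ℝ → ℝ := fun θ => w2 r θ φ * dth R1 R2 θ1 θ2 φ1 φ2 v r θ φ with hG2
  have hcontw2 : ContinuousOn (fun θ => w2 r θ φ) (Icc θ1 θ2) := contT hw2.continuousOn hr hφ'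
  have hcontv : ContinuousOn (fun θ => v r θ φ) (Icc θ1 θ2) := contT hv.continuousOn hr hφ'
  have hcontF : ContinuousOn F (Icc θ1 θ2) := hcontw2.mul hcontv
  have hcontdw2 : ContinuousOn (fun θ => dth R1 R2 θ1 θ2 φ1 φ2 w2 r θ φ) (Icc θ1 θ2) :=
    contT (smooth_dth hRR hθθ hφv hw2).continuousOn hr hφ'
  have hcontdv : ContinuousOn (fun θ => dth R1 R2 θ1 θ2 φ1 φ2 v r θ φ) (Icc θ1 θ2) :=
    contT (smooth_dth hRR hθθ hφv hv).continuousOn hr hφ'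
  have hG1c : ContinuousOn G1 (Icc θ1 θ2) := hcontdw2.mul hcontv
  have hG2c : ContinuousOn G2 (Icc θ1 θ2) := hcontw2.mul hcontdv
  have hderiv : ∀ x ∈ Ioo θ1 θ2, HasDerivWithinAt F (G1 x + G2 x) (Ioi x) x := by
    intro x hx
    have h1 : HasDerivAt (fun s => w2 r s φ) (dth R1 R2 θ1 θ2 φ1 φ2 w2 r x φ) x :=
      (slice_t hw2 hr (Ioo_subset_Icc_self hx) hφ').hasDerivAt (Icc_mem_nhds hx.1 hx.2)
    have h2 : HasDerivAt (fun s => v r s φ) (dth R1 R2 θ1 θ2 φ1 φ2 v r x φ) x :=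
      (slice_t hv hr (Ioo_subset_Icc_self hx) hφ').hasDerivAt (Icc_mem_nhds hx.1 hx.2)
    exact (h1.mul h2).hasDerivWithinAt
  have hGcont : ContinuousOn (fun θ => G1 θ + G2 θ) (Set.uIcc θ1 θ2) := by
    rw [Set.uIcc_of_le hθθ.le]; exact hG1c.add hG2c
  have key := intervalIntegral.integral_eq_sub_of_hasDeriv_right_of_le hθθ.le hcontF hderiv
    hGcont.intervalIntegrable
  have hF1 : F θ1 = 0 := by
    have := (vanish_t hv0 hθθ.le hr hφ').1
    simp [hF, this]
  have hF2 : F θ2 = 0 := by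
    have := (vanish_t hv0 hθθ.le hr hφ').2
    simp [hF, this]
  rw [hF1, hF2, sub_zero, intervalIntegral.integral_of_le hθθ.le,
    ← integral_Icc_eq_integral_Ioc] at key
  have hsplit : ∫ θ in Icc θ1 θ2, (G1 θ + G2 θ)
      = (∫ θ in Icc θ1 θ2, G1 θ) + ∫ θ in Icc θ1 θ2, G2 θ :=
    integral_add (hG1c.integrableOn_compact isCompact_Icc) (hG2c.integrableOn_compact isCompact_Icc)
  have : (∫ θ in Icc θ1 θ2, G1 θ) = - ∫ θ in Icc θ1 θ2, G2 θ := by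
    rw [hsplit] at key; linarith
  exact this

lemma ibp_phi (hRR : R1 < R2) (hθθ : θ1 < θ2) (hφv : φ1 < φ2) {w v : ℝ → ℝ → ℝ → ℝ}
    (hv : ContDiffOn ℝ (⊤ : ℕ∞) (P3 v) (Bx R1 R2 θ1 θ2 φ1 φ2))
    (hw : ContDiffOn ℝ (⊤ : ℕ∞) (P3 w) (Bx R1 R2 θ1 θ2 φ1 φ2))
    (hv0 : VanishOnBdry R1 R2 θ1 θ2 φ1 φ2 v)
    {r θ : ℝ} (hr : r ∈ Icc R1 R2) (hθ : θ ∈ Icc θ1 θ2) :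
    ∫ φ in Icc φ1 φ2,
        dph R1 R2 θ1 θ2 φ1 φ2 (dph R1 R2 θ1 θ2 φ1 φ2 w) r θ φ * v r θ φ
      = - ∫ φ in Icc φ1 φ2,
          dph R1 R2 θ1 θ2 φ1 φ2 w r θ φ * dph R1 R2 θ1 θ2 φ1 φ2 v r θ φ := by
  set dw : ℝ → ℝ → ℝ → ℝ := dph R1 R2 θ1 θ2 φ1 φ2 w with hdw
  have hdwsm : ContDiffOn ℝ (⊤ : ℕ∞) (P3 dw) (Bx R1 R2 θ1 θ2 φ1 φ2) := smooth_dph hRR hθθ hφv hw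
  set F : ℝ → ℝ := fun φ => dw r θ φ * v r θ φ with hF
  set G1 : ℝ → ℝ := fun φ => dph R1 R2 θ1 θ2 φ1 φ2 dw r θ φ * v r θ φ with hG1
  set G2 : ℝ → ℝ := fun φ => dw r θ φ * dph R1 R2 θ1 θ2 φ1 φ2 v r θ φ with hG2
  have hcontdw : ContinuousOn (fun φ => dw r θ φ) (Icc φ1 φ2) := contP hdwsm.continuousOn hr hθ
  have hcontv : ContinuousOn (fun φ => v r θ φ) (Icc φ1 φ2) := contP hv.continuousOn hr hθ
  have hcontF : ContinuousOn F (Icc φ1 φ2) := hcontdw.mul hcontv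
  have hcontd2 : ContinuousOn (fun φ => dph R1 R2 θ1 θ2 φ1 φ2 dw r θ φ) (Icc φ1 φ2) :=
    contP (smooth_dph hRR hθθ hφv hdwsm).continuousOn hr hθ
  have hcontdv : ContinuousOn (fun φ => dph R1 R2 θ1 θ2 φ1 φ2 v r θ φ) (Icc φ1 φ2) :=
    contP (smooth_dph hRR hθθ hφv hv).continuousOn hr hθ
  have hG1c : ContinuousOn G1 (Icc φ1 φ2) := hcontd2.mul hcontv
  have hG2c : ContinuousOn G2 (Icc φ1 φ2) := hcontdw.mul hcontdv
  have hderiv : ∀ x ∈ Ioo φ1 φ2, HasDerivWithinAt F (G1 x + G2 x) (Ioi x) x := by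
    intro x hx
    have h1 : HasDerivAt (fun s => dw r θ s) (dph R1 R2 θ1 θ2 φ1 φ2 dw r θ x) x :=
      (slice_p hdwsm hr hθ (Ioo_subset_Icc_self hx)).hasDerivAt (Icc_mem_nhds hx.1 hx.2)
    have h2 : HasDerivAt (fun s => v r θ s) (dph R1 R2 θ1 θ2 φ1 φ2 v r θ x) x :=
      (slice_p hv hr hθ (Ioo_subset_Icc_self hx)).hasDerivAt (Icc_mem_nhds hx.1 hx.2)
    exact (h1.mul h2).hasDerivWithinAt
  have hGcont : ContinuousOn (fun φ => G1 φ + G2 φ) (Set.uIcc φ1 φ2) := by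
    rw [Set.uIcc_of_le hφv.le]; exact hG1c.add hG2c
  have key := intervalIntegral.integral_eq_sub_of_hasDeriv_right_of_le hφv.le hcontF hderiv
    hGcont.intervalIntegrable
  have hF1 : F φ1 = 0 := by
    have := (vanish_p hv0 hφv.le hr hθ).1
    simp [hF, this]
  have hF2 : F φ2 = 0 := by
    have := (vanish_p hv0 hφv.le hr hθ).2
    simp [hF, this]
  rw [hF1, hF2, sub_zero, intervalIntegral.integral_of_le hφv.le,
    ← integral_Icc_eq_integral_Ioc] at key
  have hsplit : ∫ φ in Icc φ1 φ2, (G1 φ + G2 φ)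
      = (∫ φ in Icc φ1 φ2, G1 φ) + ∫ φ in Icc φ1 φ2, G2 φ :=
    integral_add (hG1c.integrableOn_compact isCompact_Icc) (hG2c.integrableOn_compact isCompact_Icc)
  have : (∫ φ in Icc φ1 φ2, G1 φ) = - ∫ φ in Icc φ1 φ2, G2 φ := by
    rw [hsplit] at key; linarith
  exact this

lemma swap_tp {f : ℝ → ℝ → ℝ}
    (hf : ContinuousOn (fun y : ℝ × ℝ => f y.1 y.2) (Icc θ1 θ2 ×ˢ Icc φ1 φ2)) :
    ∫ θ in Icc θ1 θ2, ∫ φ in Icc φ1 φ2, f θ φ = ∫ φ in Icc φ1 φ2, ∫ θ in Icc θ1 θ2, f θ φ := by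
  apply MeasureTheory.integral_integral_swap
  rw [Measure.prod_restrict]
  exact hf.integrableOn_compact (isCompact_Icc.prod isCompact_Icc)

lemma iter_eq (u : ℝ → ℝ → ℝ → ℝ) (hu : ContinuousOn (P3 u) (Bx R1 R2 θ1 θ2 φ1 φ2)) :
    (∫ r in Icc R1 R2, ∫ θ in Icc θ1 θ2, ∫ φ in Icc φ1 φ2, u r θ φ)
      = ∫ p in Bx R1 R2 θ1 θ2 φ1 φ2, P3 u p := by
  have h2 : ∀ r ∈ Icc R1 R2,
      (∫ θ in Icc θ1 θ2, ∫ φ in Icc φ1 φ2, u r θ φ)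
        = ∫ y in Icc θ1 θ2 ×ˢ Icc φ1 φ2, u r y.1 y.2 := by
    intro r hr
    have hcont : ContinuousOn (fun y : ℝ × ℝ => u r y.1 y.2) (Icc θ1 θ2 ×ˢ Icc φ1 φ2) :=
      hu.comp ((continuous_const.prodMk continuous_id).continuousOn) (fun y hy => ⟨hr, hy⟩)
    have hint : Integrable (Function.uncurry fun θ φ => u r θ φ)
        ((volume.restrict (Icc θ1 θ2)).prod (volume.restrict (Icc φ1 φ2))) := by
      rw [Measure.prod_restrict]
      exact hcont.integrableOn_compact (isCompact_Icc.prod isCompact_Icc)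
    have := MeasureTheory.integral_integral hint
    rw [this, Measure.prod_restrict]
    rfl
  rw [setIntegral_congr_fun measurableSet_Icc h2]
  have hint : Integrable (Function.uncurry fun r (y : ℝ × ℝ) => u r y.1 y.2)
      ((volume.restrict (Icc R1 R2)).prod
        ((volume : Measure (ℝ × ℝ)).restrict (Icc θ1 θ2 ×ˢ Icc φ1 φ2))) := by
    rw [Measure.prod_restrict]
    exact hu.integrableOn_compact (isCompact_Icc.prod (isCompact_Icc.prod isCompact_Icc))
  have := MeasureTheory.integral_integral hint
  rw [this, Measure.prod_restrict]
  rfl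

lemma lin_d {v q w : ℝ → ℝ → ℝ → ℝ} (hRR : R1 < R2) (hθθ : θ1 < θ2) (hφ : φ1 < φ2)
    (hvw : ∀ r θ φ, w r θ φ = v r θ φ - q r θ φ)
    (hv : ContDiffOn ℝ (⊤ : ℕ∞) (P3 v) (Bx R1 R2 θ1 θ2 φ1 φ2))
    (hq : ContDiffOn ℝ (⊤ : ℕ∞) (P3 q) (Bx R1 R2 θ1 θ2 φ1 φ2))
    {r θ φ : ℝ} (hp : (r, θ, φ) ∈ Bx R1 R2 θ1 θ2 φ1 φ2) (e : ℝ × ℝ × ℝ) :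
    fderivWithin ℝ (P3 w) (Bx R1 R2 θ1 θ2 φ1 φ2) (r, θ, φ) e
      = fderivWithin ℝ (P3 v) (Bx R1 R2 θ1 θ2 φ1 φ2) (r, θ, φ) e
        - fderivWithin ℝ (P3 q) (Bx R1 R2 θ1 θ2 φ1 φ2) (r, θ, φ) e := by
  have hPw : P3 w = fun p => P3 v p - P3 q p := by
    funext p; simp [P3, hvw]
  rw [hPw, fderivWithin_fun_sub ((uD hRR hθθ hφ) _ hp)
    (hv.differentiableOn (by norm_num) _ hp) (hq.differentiableOn (by norm_num) _ hp)]
  rfl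

end TCEI

namespace TCEI
variable {R1 R2 θ1 θ2 φ1 φ2 : ℝ}

variable {R1 R2 θ1 θ2 φ1 φ2 : ℝ}

lemma contTP {F : ℝ × ℝ × ℝ → ℝ} (hF : ContinuousOn F (Bx R1 R2 θ1 θ2 φ1 φ2)) {r : ℝ}
    (hr : r ∈ Icc R1 R2) :
    ContinuousOn (fun y : ℝ × ℝ => F (r, y.1, y.2)) (Icc θ1 θ2 ×ˢ Icc φ1 φ2) :=
  hF.comp ((continuous_const.prodMk continuous_id).continuousOn) (fun y hy => ⟨hr, hy⟩)

set_option maxHeartbeats 2000000 in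
lemma master (hR1 : 0 < R1) (hRR : R1 < R2) (hθ1 : 0 < θ1) (hθθ : θ1 < θ2)
    (hθ2 : θ2 < Real.pi) (hφv : φ1 < φ2)
    (v q w : ℝ → ℝ → ℝ → ℝ)
    (hvw : ∀ r θ φ, w r θ φ = v r θ φ - q r θ φ)
    (hsv : ContDiffOn ℝ (⊤ : ℕ∞) (P3 v) (Bx R1 R2 θ1 θ2 φ1 φ2))
    (hsq : ContDiffOn ℝ (⊤ : ℕ∞) (P3 q) (Bx R1 R2 θ1 θ2 φ1 φ2))
    (hv0 : VanishOnBdry R1 R2 θ1 θ2 φ1 φ2 v)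
    (hq0 : VanishOnBdry R1 R2 θ1 θ2 φ1 φ2 q) :
    1 / 2 * ipw R1 R2 θ1 θ2 φ1 φ2
        (fun r θ φ => lap w r θ φ - laph R1 θ1 w r θ φ) v
    = 1 / 4 * (wnorm R1 R2 θ1 θ2 φ1 φ2 (fun r θ => (r ^ 2 / R1 ^ 2 - 1) * Real.sin θ) (pt v)
          - wnorm R1 R2 θ1 θ2 φ1 φ2 (fun r θ => (r ^ 2 / R1 ^ 2 - 1) * Real.sin θ) (pt q)
          + wnorm R1 R2 θ1 θ2 φ1 φ2 (fun r θ => (r ^ 2 / R1 ^ 2 - 1) * Real.sin θ) (pt w))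
      + 1 / 4 * (wnorm R1 R2 θ1 θ2 φ1 φ2 (fun r θ => r ^ 2 * Real.sin θ * (1 / (R1 ^ 2 * Real.sin θ1 ^ 2) - 1 / (r ^ 2 * Real.sin θ ^ 2))) (pp v)
          - wnorm R1 R2 θ1 θ2 φ1 φ2 (fun r θ => r ^ 2 * Real.sin θ * (1 / (R1 ^ 2 * Real.sin θ1 ^ 2) - 1 / (r ^ 2 * Real.sin θ ^ 2))) (pp q)
          + wnorm R1 R2 θ1 θ2 φ1 φ2 (fun r θ => r ^ 2 * Real.sin θ * (1 / (R1 ^ 2 * Real.sin θ1 ^ 2) - 1 / (r ^ 2 * Real.sin θ ^ 2))) (pp w)) := by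
  have hK : IsCompact (Bx R1 R2 θ1 θ2 φ1 φ2) := isCompact_Icc.prod (isCompact_Icc.prod isCompact_Icc)
  have hsinpos : ∀ θ ∈ Icc θ1 θ2, 0 < Real.sin θ := fun θ h =>
    Real.sin_pos_of_pos_of_lt_pi (lt_of_lt_of_le hθ1 h.1) (lt_of_le_of_lt h.2 hθ2)
  have hsin1 : 0 < Real.sin θ1 := hsinpos θ1 ⟨le_rfl, hθθ.le⟩
  have hPw : P3 w = fun p => P3 v p - P3 q p := by funext p; simp [P3, hvw]
  have hsw : ContDiffOn ℝ (⊤ : ℕ∞) (P3 w) (Bx R1 R2 θ1 θ2 φ1 φ2) := by rw [hPw]; exact hsv.sub hsq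
  -- smoothness of derived functions
  have hw2sm := smooth_w2 hRR hθθ hφv hsw
  have hdw2 := smooth_dth hRR hθθ hφv hw2sm
  have hdthw := smooth_dth hRR hθθ hφv hsw
  have hdthv := smooth_dth hRR hθθ hφv hsv
  have hdthq := smooth_dth hRR hθθ hφv hsq
  have hdpw := smooth_dph hRR hθθ hφv hsw
  have hd2pw := smooth_dph hRR hθθ hφv hdpw
  have hdpv := smooth_dph hRR hθθ hφv hsv
  have hdpq := smooth_dph hRR hθθ hφv hsq
  -- elementary continuity facts
  have hr0 : ∀ p ∈ (Bx R1 R2 θ1 θ2 φ1 φ2), (p.1 : ℝ) ≠ 0 := fun p hp =>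
    ne_of_gt (lt_of_lt_of_le hR1 hp.1.1)
  have hs0 : ∀ p ∈ (Bx R1 R2 θ1 θ2 φ1 φ2), Real.sin p.2.1 ≠ 0 := fun p hp =>
    ne_of_gt (hsinpos _ hp.2.1)
  have hden0 : ∀ p ∈ (Bx R1 R2 θ1 θ2 φ1 φ2), p.1 ^ 2 * Real.sin p.2.1 ^ 2 ≠ 0 := fun p hp =>
    mul_ne_zero (pow_ne_zero 2 (hr0 p hp)) (pow_ne_zero 2 (hs0 p hp))
  have csinp : Continuous (fun p : ℝ × ℝ × ℝ => Real.sin p.2.1) :=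
    Real.continuous_sin.comp (continuous_fst.comp continuous_snd)
  have cr2s : Continuous (fun p : ℝ × ℝ × ℝ => p.1 ^ 2 * Real.sin p.2.1) :=
    (continuous_fst.pow 2).mul csinp
  have cinvden : ContinuousOn (fun p : ℝ × ℝ × ℝ => 1 / (p.1 ^ 2 * Real.sin p.2.1 ^ 2)) (Bx R1 R2 θ1 θ2 φ1 φ2) :=
    continuousOn_const.div ((continuous_fst.pow 2).mul (csinp.pow 2)).continuousOn hden0
  have cwt1 : Continuous (fun p : ℝ × ℝ × ℝ => 1 - p.1 ^ 2 / R1 ^ 2) :=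
    continuous_const.sub ((continuous_fst.pow 2).div_const (R1 ^ 2))
  have cA1wt : Continuous (fun p : ℝ × ℝ × ℝ => (p.1 ^ 2 / R1 ^ 2 - 1) * Real.sin p.2.1) :=
    (((continuous_fst.pow 2).div_const (R1 ^ 2)).sub continuous_const).mul csinp
  have cB1wt : ContinuousOn (fun p : ℝ × ℝ × ℝ =>
      p.1 ^ 2 * Real.sin p.2.1 * (1 / (R1 ^ 2 * Real.sin θ1 ^ 2) - 1 / (p.1 ^ 2 * Real.sin p.2.1 ^ 2)))
      (Bx R1 R2 θ1 θ2 φ1 φ2) :=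
    cr2s.continuousOn.mul (continuousOn_const.sub cinvden)
  have cE2wt : ContinuousOn (fun p : ℝ × ℝ × ℝ =>
      (1 / (p.1 ^ 2 * Real.sin p.2.1 ^ 2) - 1 / (R1 ^ 2 * Real.sin θ1 ^ 2)) * (p.1 ^ 2 * Real.sin p.2.1))
      (Bx R1 R2 θ1 θ2 φ1 φ2) :=
    (cinvden.sub continuousOn_const).mul cr2s.continuousOn
  have cv : ContinuousOn (P3 v) (Bx R1 R2 θ1 θ2 φ1 φ2) := hsv.continuousOn
  have cE1 : ContinuousOn (P3 (fun r θ φ => (1 - r ^ 2 / R1 ^ 2) * (dth R1 R2 θ1 θ2 φ1 φ2 (fun r' θ' φ' => Real.sin θ' * dth R1 R2 θ1 θ2 φ1 φ2 w r' θ' φ') r θ φ * v r θ φ))) (Bx R1 R2 θ1 θ2 φ1 φ2) :=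
    cwt1.continuousOn.mul (hdw2.continuousOn.mul cv)
  have cE2 : ContinuousOn (P3 (fun r θ φ => ((1 / (r ^ 2 * Real.sin θ ^ 2) - 1 / (R1 ^ 2 * Real.sin θ1 ^ 2)) * (r ^ 2 * Real.sin θ)) * (dph R1 R2 θ1 θ2 φ1 φ2 (dph R1 R2 θ1 θ2 φ1 φ2 w) r θ φ * v r θ φ))) (Bx R1 R2 θ1 θ2 φ1 φ2) :=
    cE2wt.mul (hd2pw.continuousOn.mul cv)
  have cG1 : ContinuousOn (P3 (fun r θ φ => (r ^ 2 / R1 ^ 2 - 1) * (Real.sin θ * dth R1 R2 θ1 θ2 φ1 φ2 w r θ φ * dth R1 R2 θ1 θ2 φ1 φ2 v r θ φ))) (Bx R1 R2 θ1 θ2 φ1 φ2) :=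
    (((continuous_fst.pow 2).div_const (R1 ^ 2)).sub continuous_const).continuousOn.mul
      ((csinp.continuousOn.mul hdthw.continuousOn).mul hdthv.continuousOn)
  have cG2 : ContinuousOn (P3 (fun r θ φ => (r ^ 2 * Real.sin θ * (1 / (R1 ^ 2 * Real.sin θ1 ^ 2) - 1 / (r ^ 2 * Real.sin θ ^ 2))) * (dph R1 R2 θ1 θ2 φ1 φ2 w r θ φ * dph R1 R2 θ1 θ2 φ1 φ2 v r θ φ))) (Bx R1 R2 θ1 θ2 φ1 φ2) :=
    cB1wt.mul (hdpw.continuousOn.mul hdpv.continuousOn)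
  have cA1 : ContinuousOn (P3 (fun r θ φ => (r ^ 2 / R1 ^ 2 - 1) * Real.sin θ * dth R1 R2 θ1 θ2 φ1 φ2 v r θ φ ^ 2)) (Bx R1 R2 θ1 θ2 φ1 φ2) :=
    cA1wt.continuousOn.mul (hdthv.continuousOn.pow 2)
  have cA2 : ContinuousOn (P3 (fun r θ φ => (r ^ 2 / R1 ^ 2 - 1) * Real.sin θ * dth R1 R2 θ1 θ2 φ1 φ2 q r θ φ ^ 2)) (Bx R1 R2 θ1 θ2 φ1 φ2) :=
    cA1wt.continuousOn.mul (hdthq.continuousOn.pow 2)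
  have cA3 : ContinuousOn (P3 (fun r θ φ => (r ^ 2 / R1 ^ 2 - 1) * Real.sin θ * dth R1 R2 θ1 θ2 φ1 φ2 w r θ φ ^ 2)) (Bx R1 R2 θ1 θ2 φ1 φ2) :=
    cA1wt.continuousOn.mul (hdthw.continuousOn.pow 2)
  have cB1 : ContinuousOn (P3 (fun r θ φ => r ^ 2 * Real.sin θ * (1 / (R1 ^ 2 * Real.sin θ1 ^ 2) - 1 / (r ^ 2 * Real.sin θ ^ 2)) * dph R1 R2 θ1 θ2 φ1 φ2 v r θ φ ^ 2)) (Bx R1 R2 θ1 θ2 φ1 φ2) :=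
    cB1wt.mul (hdpv.continuousOn.pow 2)
  have cB2 : ContinuousOn (P3 (fun r θ φ => r ^ 2 * Real.sin θ * (1 / (R1 ^ 2 * Real.sin θ1 ^ 2) - 1 / (r ^ 2 * Real.sin θ ^ 2)) * dph R1 R2 θ1 θ2 φ1 φ2 q r θ φ ^ 2)) (Bx R1 R2 θ1 θ2 φ1 φ2) :=
    cB1wt.mul (hdpq.continuousOn.pow 2)
  have cB3 : ContinuousOn (P3 (fun r θ φ => r ^ 2 * Real.sin θ * (1 / (R1 ^ 2 * Real.sin θ1 ^ 2) - 1 / (r ^ 2 * Real.sin θ ^ 2)) * dph R1 R2 θ1 θ2 φ1 φ2 w r θ φ ^ 2)) (Bx R1 R2 θ1 θ2 φ1 φ2) :=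
    cB1wt.mul (hdpw.continuousOn.pow 2)
  -- Step 1: rewrite the LHS integrand on the interior
  have hL : ipw R1 R2 θ1 θ2 φ1 φ2 (fun r θ φ => lap w r θ φ - laph R1 θ1 w r θ φ) v
      = ∫ r in Icc R1 R2, ∫ θ in Icc θ1 θ2, ∫ φ in Icc φ1 φ2,
          ((fun r θ φ => (1 - r ^ 2 / R1 ^ 2) * (dth R1 R2 θ1 θ2 φ1 φ2 (fun r' θ' φ' => Real.sin θ' * dth R1 R2 θ1 θ2 φ1 φ2 w r' θ' φ') r θ φ * v r θ φ)) r θ φ + (fun r θ φ => ((1 / (r ^ 2 * Real.sin θ ^ 2) - 1 / (R1 ^ 2 * Real.sin θ1 ^ 2)) * (r ^ 2 * Real.sin θ)) * (dph R1 R2 θ1 θ2 φ1 φ2 (dph R1 R2 θ1 θ2 φ1 φ2 w) r θ φ * v r θ φ)) r θ φ) := by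
    simp only [ipw]
    apply setIntegral_congr_fun measurableSet_Icc
    intro r hr
    calc (∫ θ in Icc θ1 θ2, ∫ φ in Icc φ1 φ2,
            (lap w r θ φ - laph R1 θ1 w r θ φ) * v r θ φ * (r ^ 2 * Real.sin θ))
        = ∫ θ in Ioo θ1 θ2, ∫ φ in Icc φ1 φ2,
            (lap w r θ φ - laph R1 θ1 w r θ φ) * v r θ φ * (r ^ 2 * Real.sin θ) :=
          integral_Icc_eq_integral_Ioo
      _ = ∫ θ in Ioo θ1 θ2, ∫ φ in Icc φ1 φ2, ((fun r θ φ => (1 - r ^ 2 / R1 ^ 2) * (dth R1 R2 θ1 θ2 φ1 φ2 (fun r' θ' φ' => Real.sin θ' * dth R1 R2 θ1 θ2 φ1 φ2 w r' θ' φ') r θ φ * v r θ φ)) r θ φ + (fun r θ φ => ((1 / (r ^ 2 * Real.sin θ ^ 2) - 1 / (R1 ^ 2 * Real.sin θ1 ^ 2)) * (r ^ 2 * Real.sin θ)) * (dph R1 R2 θ1 θ2 φ1 φ2 (dph R1 R2 θ1 θ2 φ1 φ2 w) r θ φ * v r θ φ)) r θ φ) := by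
          apply setIntegral_congr_fun measurableSet_Ioo
          intro θ hθ
          calc (∫ φ in Icc φ1 φ2,
                  (lap w r θ φ - laph R1 θ1 w r θ φ) * v r θ φ * (r ^ 2 * Real.sin θ))
              = ∫ φ in Ioo φ1 φ2,
                  (lap w r θ φ - laph R1 θ1 w r θ φ) * v r θ φ * (r ^ 2 * Real.sin θ) :=
                integral_Icc_eq_integral_Ioo
            _ = ∫ φ in Ioo φ1 φ2, ((fun r θ φ => (1 - r ^ 2 / R1 ^ 2) * (dth R1 R2 θ1 θ2 φ1 φ2 (fun r' θ' φ' => Real.sin θ' * dth R1 R2 θ1 θ2 φ1 φ2 w r' θ' φ') r θ φ * v r θ φ)) r θ φ + (fun r θ φ => ((1 / (r ^ 2 * Real.sin θ ^ 2) - 1 / (R1 ^ 2 * Real.sin θ1 ^ 2)) * (r ^ 2 * Real.sin θ)) * (dph R1 R2 θ1 θ2 φ1 φ2 (dph R1 R2 θ1 θ2 φ1 φ2 w) r θ φ * v r θ φ)) r θ φ) := by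
                apply setIntegral_congr_fun measurableSet_Ioo
                intro φ hφ'
                have hsθ : Real.sin θ ≠ 0 := ne_of_gt (hsinpos θ (Ioo_subset_Icc_self hθ))
                have hrne : r ≠ 0 := ne_of_gt (lt_of_lt_of_le hR1 hr.1)
                have hR1ne : R1 ≠ 0 := ne_of_gt hR1
                have hs1ne : Real.sin θ1 ≠ 0 := ne_of_gt hsin1
                simp only [lap, laph, Drr, Dtt, Dhtt, Dpp, Dhpp]
                rw [pt2_eq hRR hθθ hφv hsw hr hθ (Ioo_subset_Icc_self hφ'),
                  pp2_eq hsw hdpw hr (Ioo_subset_Icc_self hθ) hφ']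
                field_simp
                ring
            _ = ∫ φ in Icc φ1 φ2, ((fun r θ φ => (1 - r ^ 2 / R1 ^ 2) * (dth R1 R2 θ1 θ2 φ1 φ2 (fun r' θ' φ' => Real.sin θ' * dth R1 R2 θ1 θ2 φ1 φ2 w r' θ' φ') r θ φ * v r θ φ)) r θ φ + (fun r θ φ => ((1 / (r ^ 2 * Real.sin θ ^ 2) - 1 / (R1 ^ 2 * Real.sin θ1 ^ 2)) * (r ^ 2 * Real.sin θ)) * (dph R1 R2 θ1 θ2 φ1 φ2 (dph R1 R2 θ1 θ2 φ1 φ2 w) r θ φ * v r θ φ)) r θ φ) := integral_Icc_eq_integral_Ioo.symm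
      _ = ∫ θ in Icc θ1 θ2, ∫ φ in Icc φ1 φ2, ((fun r θ φ => (1 - r ^ 2 / R1 ^ 2) * (dth R1 R2 θ1 θ2 φ1 φ2 (fun r' θ' φ' => Real.sin θ' * dth R1 R2 θ1 θ2 φ1 φ2 w r' θ' φ') r θ φ * v r θ φ)) r θ φ + (fun r θ φ => ((1 / (r ^ 2 * Real.sin θ ^ 2) - 1 / (R1 ^ 2 * Real.sin θ1 ^ 2)) * (r ^ 2 * Real.sin θ)) * (dph R1 R2 θ1 θ2 φ1 φ2 (dph R1 R2 θ1 θ2 φ1 φ2 w) r θ φ * v r θ φ)) r θ φ) :=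
          integral_Icc_eq_integral_Ioo.symm
  -- Step 2: split and IBP in θ
  have hE1G1 : (∫ r in Icc R1 R2, ∫ θ in Icc θ1 θ2, ∫ φ in Icc φ1 φ2, (fun r θ φ => (1 - r ^ 2 / R1 ^ 2) * (dth R1 R2 θ1 θ2 φ1 φ2 (fun r' θ' φ' => Real.sin θ' * dth R1 R2 θ1 θ2 φ1 φ2 w r' θ' φ') r θ φ * v r θ φ)) r θ φ)
      = ∫ r in Icc R1 R2, ∫ θ in Icc θ1 θ2, ∫ φ in Icc φ1 φ2, (fun r θ φ => (r ^ 2 / R1 ^ 2 - 1) * (Real.sin θ * dth R1 R2 θ1 θ2 φ1 φ2 w r θ φ * dth R1 R2 θ1 θ2 φ1 φ2 v r θ φ)) r θ φ := by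
    apply setIntegral_congr_fun measurableSet_Icc
    intro r hr
    calc (∫ θ in Icc θ1 θ2, ∫ φ in Icc φ1 φ2, (fun r θ φ => (1 - r ^ 2 / R1 ^ 2) * (dth R1 R2 θ1 θ2 φ1 φ2 (fun r' θ' φ' => Real.sin θ' * dth R1 R2 θ1 θ2 φ1 φ2 w r' θ' φ') r θ φ * v r θ φ)) r θ φ)
        = ∫ φ in Icc φ1 φ2, ∫ θ in Icc θ1 θ2, (fun r θ φ => (1 - r ^ 2 / R1 ^ 2) * (dth R1 R2 θ1 θ2 φ1 φ2 (fun r' θ' φ' => Real.sin θ' * dth R1 R2 θ1 θ2 φ1 φ2 w r' θ' φ') r θ φ * v r θ φ)) r θ φ := swap_tp (contTP cE1 hr)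
      _ = ∫ φ in Icc φ1 φ2, ∫ θ in Icc θ1 θ2, (fun r θ φ => (r ^ 2 / R1 ^ 2 - 1) * (Real.sin θ * dth R1 R2 θ1 θ2 φ1 φ2 w r θ φ * dth R1 R2 θ1 θ2 φ1 φ2 v r θ φ)) r θ φ := by
          apply setIntegral_congr_fun measurableSet_Icc
          intro φ hφ'
          have hib := ibp_theta hRR hθθ hφv hsv hw2sm hv0 hr hφ'
          calc (∫ θ in Icc θ1 θ2, (fun r θ φ => (1 - r ^ 2 / R1 ^ 2) * (dth R1 R2 θ1 θ2 φ1 φ2 (fun r' θ' φ' => Real.sin θ' * dth R1 R2 θ1 θ2 φ1 φ2 w r' θ' φ') r θ φ * v r θ φ)) r θ φ)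
              = (1 - r ^ 2 / R1 ^ 2) * ∫ θ in Icc θ1 θ2,
                  (dth R1 R2 θ1 θ2 φ1 φ2 (fun r' θ' φ' => Real.sin θ' * dth R1 R2 θ1 θ2 φ1 φ2 w r' θ' φ') r θ φ * v r θ φ) := integral_const_mul _ _
            _ = (1 - r ^ 2 / R1 ^ 2) * -(∫ θ in Icc θ1 θ2,
                  Real.sin θ * dth R1 R2 θ1 θ2 φ1 φ2 w r θ φ * dth R1 R2 θ1 θ2 φ1 φ2 v r θ φ) := by rw [hib]
            _ = (r ^ 2 / R1 ^ 2 - 1) * ∫ θ in Icc θ1 θ2,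
                  (Real.sin θ * dth R1 R2 θ1 θ2 φ1 φ2 w r θ φ * dth R1 R2 θ1 θ2 φ1 φ2 v r θ φ) := by ring
            _ = ∫ θ in Icc θ1 θ2, (fun r θ φ => (r ^ 2 / R1 ^ 2 - 1) * (Real.sin θ * dth R1 R2 θ1 θ2 φ1 φ2 w r θ φ * dth R1 R2 θ1 θ2 φ1 φ2 v r θ φ)) r θ φ := (integral_const_mul _ _).symm
      _ = ∫ θ in Icc θ1 θ2, ∫ φ in Icc φ1 φ2, (fun r θ φ => (r ^ 2 / R1 ^ 2 - 1) * (Real.sin θ * dth R1 R2 θ1 θ2 φ1 φ2 w r θ φ * dth R1 R2 θ1 θ2 φ1 φ2 v r θ φ)) r θ φ := (swap_tp (contTP cG1 hr)).symm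
  -- Step 3: IBP in φ
  have hE2G2 : (∫ r in Icc R1 R2, ∫ θ in Icc θ1 θ2, ∫ φ in Icc φ1 φ2, (fun r θ φ => ((1 / (r ^ 2 * Real.sin θ ^ 2) - 1 / (R1 ^ 2 * Real.sin θ1 ^ 2)) * (r ^ 2 * Real.sin θ)) * (dph R1 R2 θ1 θ2 φ1 φ2 (dph R1 R2 θ1 θ2 φ1 φ2 w) r θ φ * v r θ φ)) r θ φ)
      = ∫ r in Icc R1 R2, ∫ θ in Icc θ1 θ2, ∫ φ in Icc φ1 φ2, (fun r θ φ => (r ^ 2 * Real.sin θ * (1 / (R1 ^ 2 * Real.sin θ1 ^ 2) - 1 / (r ^ 2 * Real.sin θ ^ 2))) * (dph R1 R2 θ1 θ2 φ1 φ2 w r θ φ * dph R1 R2 θ1 θ2 φ1 φ2 v r θ φ)) r θ φ := by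
    apply setIntegral_congr_fun measurableSet_Icc
    intro r hr
    apply setIntegral_congr_fun measurableSet_Icc
    intro θ hθ
    have hib := ibp_phi hRR hθθ hφv hsv hsw hv0 hr hθ
    calc (∫ φ in Icc φ1 φ2, (fun r θ φ => ((1 / (r ^ 2 * Real.sin θ ^ 2) - 1 / (R1 ^ 2 * Real.sin θ1 ^ 2)) * (r ^ 2 * Real.sin θ)) * (dph R1 R2 θ1 θ2 φ1 φ2 (dph R1 R2 θ1 θ2 φ1 φ2 w) r θ φ * v r θ φ)) r θ φ)
        = ((1 / (r ^ 2 * Real.sin θ ^ 2) - 1 / (R1 ^ 2 * Real.sin θ1 ^ 2)) * (r ^ 2 * Real.sin θ)) *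
            ∫ φ in Icc φ1 φ2, (dph R1 R2 θ1 θ2 φ1 φ2 (dph R1 R2 θ1 θ2 φ1 φ2 w) r θ φ * v r θ φ) := integral_const_mul _ _
      _ = ((1 / (r ^ 2 * Real.sin θ ^ 2) - 1 / (R1 ^ 2 * Real.sin θ1 ^ 2)) * (r ^ 2 * Real.sin θ)) *
            -(∫ φ in Icc φ1 φ2, dph R1 R2 θ1 θ2 φ1 φ2 w r θ φ * dph R1 R2 θ1 θ2 φ1 φ2 v r θ φ) := by rw [hib]
      _ = (r ^ 2 * Real.sin θ * (1 / (R1 ^ 2 * Real.sin θ1 ^ 2) - 1 / (r ^ 2 * Real.sin θ ^ 2))) *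
            ∫ φ in Icc φ1 φ2, (dph R1 R2 θ1 θ2 φ1 φ2 w r θ φ * dph R1 R2 θ1 θ2 φ1 φ2 v r θ φ) := by ring
      _ = ∫ φ in Icc φ1 φ2, (fun r θ φ => (r ^ 2 * Real.sin θ * (1 / (R1 ^ 2 * Real.sin θ1 ^ 2) - 1 / (r ^ 2 * Real.sin θ ^ 2))) * (dph R1 R2 θ1 θ2 φ1 φ2 w r θ φ * dph R1 R2 θ1 θ2 φ1 φ2 v r θ φ)) r θ φ := (integral_const_mul _ _).symm
  -- Step 4: wnorm conversions (θ-direction)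
  have hwnA : ∀ (x : ℝ → ℝ → ℝ → ℝ), ContDiffOn ℝ (⊤ : ℕ∞) (P3 x) (Bx R1 R2 θ1 θ2 φ1 φ2) →
      wnorm R1 R2 θ1 θ2 φ1 φ2 (fun r θ => (r ^ 2 / R1 ^ 2 - 1) * Real.sin θ) (pt x)
        = ∫ r in Icc R1 R2, ∫ θ in Icc θ1 θ2, ∫ φ in Icc φ1 φ2,
            ((r ^ 2 / R1 ^ 2 - 1) * Real.sin θ * dth R1 R2 θ1 θ2 φ1 φ2 x r θ φ ^ 2) := by
    intro x hx
    simp only [wnorm]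
    apply setIntegral_congr_fun measurableSet_Icc
    intro r hr
    calc (∫ θ in Icc θ1 θ2, ∫ φ in Icc φ1 φ2,
            (r ^ 2 / R1 ^ 2 - 1) * Real.sin θ * pt x r θ φ ^ 2)
        = ∫ θ in Ioo θ1 θ2, ∫ φ in Icc φ1 φ2,
            (r ^ 2 / R1 ^ 2 - 1) * Real.sin θ * pt x r θ φ ^ 2 := integral_Icc_eq_integral_Ioo
      _ = ∫ θ in Ioo θ1 θ2, ∫ φ in Icc φ1 φ2,
            ((r ^ 2 / R1 ^ 2 - 1) * Real.sin θ * dth R1 R2 θ1 θ2 φ1 φ2 x r θ φ ^ 2) := by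
          apply setIntegral_congr_fun measurableSet_Ioo
          intro θ hθ
          apply setIntegral_congr_fun measurableSet_Icc
          intro φ hφ'
          simp only [pt_eq hx hr hθ hφ']
      _ = ∫ θ in Icc θ1 θ2, ∫ φ in Icc φ1 φ2,
            ((r ^ 2 / R1 ^ 2 - 1) * Real.sin θ * dth R1 R2 θ1 θ2 φ1 φ2 x r θ φ ^ 2) :=
          integral_Icc_eq_integral_Ioo.symm
  -- Step 5: wnorm conversions (φ-direction)
  have hwnB : ∀ (x : ℝ → ℝ → ℝ → ℝ), ContDiffOn ℝ (⊤ : ℕ∞) (P3 x) (Bx R1 R2 θ1 θ2 φ1 φ2) →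
      wnorm R1 R2 θ1 θ2 φ1 φ2 (fun r θ => r ^ 2 * Real.sin θ * (1 / (R1 ^ 2 * Real.sin θ1 ^ 2) - 1 / (r ^ 2 * Real.sin θ ^ 2))) (pp x)
        = ∫ r in Icc R1 R2, ∫ θ in Icc θ1 θ2, ∫ φ in Icc φ1 φ2,
            (r ^ 2 * Real.sin θ * (1 / (R1 ^ 2 * Real.sin θ1 ^ 2) - 1 / (r ^ 2 * Real.sin θ ^ 2))
              * dph R1 R2 θ1 θ2 φ1 φ2 x r θ φ ^ 2) := by
    intro x hx
    simp only [wnorm]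
    apply setIntegral_congr_fun measurableSet_Icc
    intro r hr
    apply setIntegral_congr_fun measurableSet_Icc
    intro θ hθ
    calc (∫ φ in Icc φ1 φ2,
            r ^ 2 * Real.sin θ * (1 / (R1 ^ 2 * Real.sin θ1 ^ 2) - 1 / (r ^ 2 * Real.sin θ ^ 2))
              * pp x r θ φ ^ 2)
        = ∫ φ in Ioo φ1 φ2,
            r ^ 2 * Real.sin θ * (1 / (R1 ^ 2 * Real.sin θ1 ^ 2) - 1 / (r ^ 2 * Real.sin θ ^ 2))
              * pp x r θ φ ^ 2 := integral_Icc_eq_integral_Ioo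
      _ = ∫ φ in Ioo φ1 φ2,
            (r ^ 2 * Real.sin θ * (1 / (R1 ^ 2 * Real.sin θ1 ^ 2) - 1 / (r ^ 2 * Real.sin θ ^ 2))
              * dph R1 R2 θ1 θ2 φ1 φ2 x r θ φ ^ 2) := by
          apply setIntegral_congr_fun measurableSet_Ioo
          intro φ hφ'
          simp only [pp_eq hx hr hθ hφ']
      _ = ∫ φ in Icc φ1 φ2,
            (r ^ 2 * Real.sin θ * (1 / (R1 ^ 2 * Real.sin θ1 ^ 2) - 1 / (r ^ 2 * Real.sin θ ^ 2))
              * dph R1 R2 θ1 θ2 φ1 φ2 x r θ φ ^ 2) := integral_Icc_eq_integral_Ioo.symm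
  -- Step 6: pass everything to the product measure on the box and finish pointwise
  have hIE1 : (∫ r in Icc R1 R2, ∫ θ in Icc θ1 θ2, ∫ φ in Icc φ1 φ2,
      ((fun r θ φ => (1 - r ^ 2 / R1 ^ 2) * (dth R1 R2 θ1 θ2 φ1 φ2 (fun r' θ' φ' => Real.sin θ' * dth R1 R2 θ1 θ2 φ1 φ2 w r' θ' φ') r θ φ * v r θ φ)) r θ φ + (fun r θ φ => ((1 / (r ^ 2 * Real.sin θ ^ 2) - 1 / (R1 ^ 2 * Real.sin θ1 ^ 2)) * (r ^ 2 * Real.sin θ)) * (dph R1 R2 θ1 θ2 φ1 φ2 (dph R1 R2 θ1 θ2 φ1 φ2 w) r θ φ * v r θ φ)) r θ φ))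
      = (∫ r in Icc R1 R2, ∫ θ in Icc θ1 θ2, ∫ φ in Icc φ1 φ2, (fun r θ φ => (1 - r ^ 2 / R1 ^ 2) * (dth R1 R2 θ1 θ2 φ1 φ2 (fun r' θ' φ' => Real.sin θ' * dth R1 R2 θ1 θ2 φ1 φ2 w r' θ' φ') r θ φ * v r θ φ)) r θ φ)
        + (∫ r in Icc R1 R2, ∫ θ in Icc θ1 θ2, ∫ φ in Icc φ1 φ2, (fun r θ φ => ((1 / (r ^ 2 * Real.sin θ ^ 2) - 1 / (R1 ^ 2 * Real.sin θ1 ^ 2)) * (r ^ 2 * Real.sin θ)) * (dph R1 R2 θ1 θ2 φ1 φ2 (dph R1 R2 θ1 θ2 φ1 φ2 w) r θ φ * v r θ φ)) r θ φ) := by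
    rw [iter_eq (fun r θ φ => (fun r θ φ => (1 - r ^ 2 / R1 ^ 2) * (dth R1 R2 θ1 θ2 φ1 φ2 (fun r' θ' φ' => Real.sin θ' * dth R1 R2 θ1 θ2 φ1 φ2 w r' θ' φ') r θ φ * v r θ φ)) r θ φ + (fun r θ φ => ((1 / (r ^ 2 * Real.sin θ ^ 2) - 1 / (R1 ^ 2 * Real.sin θ1 ^ 2)) * (r ^ 2 * Real.sin θ)) * (dph R1 R2 θ1 θ2 φ1 φ2 (dph R1 R2 θ1 θ2 φ1 φ2 w) r θ φ * v r θ φ)) r θ φ) (cE1.add cE2),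
      iter_eq (fun r θ φ => (1 - r ^ 2 / R1 ^ 2) * (dth R1 R2 θ1 θ2 φ1 φ2 (fun r' θ' φ' => Real.sin θ' * dth R1 R2 θ1 θ2 φ1 φ2 w r' θ' φ') r θ φ * v r θ φ)) cE1, iter_eq (fun r θ φ => ((1 / (r ^ 2 * Real.sin θ ^ 2) - 1 / (R1 ^ 2 * Real.sin θ1 ^ 2)) * (r ^ 2 * Real.sin θ)) * (dph R1 R2 θ1 θ2 φ1 φ2 (dph R1 R2 θ1 θ2 φ1 φ2 w) r θ φ * v r θ φ)) cE2]
    exact integral_add (cE1.integrableOn_compact hK) (cE2.integrableOn_compact hK)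
  rw [hL, hIE1, hE1G1, hE2G2, hwnA v hsv, hwnA q hsq, hwnA w hsw,
    hwnB v hsv, hwnB q hsq, hwnB w hsw,
    iter_eq (fun r θ φ => (r ^ 2 / R1 ^ 2 - 1) * (Real.sin θ * dth R1 R2 θ1 θ2 φ1 φ2 w r θ φ * dth R1 R2 θ1 θ2 φ1 φ2 v r θ φ)) cG1, iter_eq (fun r θ φ => (r ^ 2 * Real.sin θ * (1 / (R1 ^ 2 * Real.sin θ1 ^ 2) - 1 / (r ^ 2 * Real.sin θ ^ 2))) * (dph R1 R2 θ1 θ2 φ1 φ2 w r θ φ * dph R1 R2 θ1 θ2 φ1 φ2 v r θ φ)) cG2,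
    iter_eq (fun r θ φ => (r ^ 2 / R1 ^ 2 - 1) * Real.sin θ * dth R1 R2 θ1 θ2 φ1 φ2 v r θ φ ^ 2) cA1, iter_eq (fun r θ φ => (r ^ 2 / R1 ^ 2 - 1) * Real.sin θ * dth R1 R2 θ1 θ2 φ1 φ2 q r θ φ ^ 2) cA2, iter_eq (fun r θ φ => (r ^ 2 / R1 ^ 2 - 1) * Real.sin θ * dth R1 R2 θ1 θ2 φ1 φ2 w r θ φ ^ 2) cA3,
    iter_eq (fun r θ φ => r ^ 2 * Real.sin θ * (1 / (R1 ^ 2 * Real.sin θ1 ^ 2) - 1 / (r ^ 2 * Real.sin θ ^ 2)) * dph R1 R2 θ1 θ2 φ1 φ2 v r θ φ ^ 2) cB1, iter_eq (fun r θ φ => r ^ 2 * Real.sin θ * (1 / (R1 ^ 2 * Real.sin θ1 ^ 2) - 1 / (r ^ 2 * Real.sin θ ^ 2)) * dph R1 R2 θ1 θ2 φ1 φ2 q r θ φ ^ 2) cB2, iter_eq (fun r θ φ => r ^ 2 * Real.sin θ * (1 / (R1 ^ 2 * Real.sin θ1 ^ 2) - 1 / (r ^ 2 * Real.sin θ ^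 2)) * dph R1 R2 θ1 θ2 φ1 φ2 w r θ φ ^ 2) cB3]
  -- now a finite combination of integrals over the box
  have iG1 := cG1.integrableOn_compact (μ := volume) hK
  have iG2 := cG2.integrableOn_compact (μ := volume) hK
  have iA1 := cA1.integrableOn_compact (μ := volume) hK
  have iA2 := cA2.integrableOn_compact (μ := volume) hK
  have iA3 := cA3.integrableOn_compact (μ := volume) hK
  have iB1 := cB1.integrableOn_compact (μ := volume) hK
  have iB2 := cB2.integrableOn_compact (μ := volume) hK
  have iB3 := cB3.integrableOn_compact (μ := volume) hK
  have hSA1 : (∫ p in (Bx R1 R2 θ1 θ2 φ1 φ2), (P3 (fun r θ φ => (r ^ 2 / R1 ^ 2 - 1) * Real.sin θ * dth R1 R2 θ1 θ2 φ1 φ2 v r θ φ ^ 2) p - P3 (fun r θ φ => (r ^ 2 / R1 ^ 2 - 1) * Real.sin θ * dth R1 R2 θ1 θ2 φ1 φ2 q r θ φ ^ 2) p))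
      = (∫ p in (Bx R1 R2 θ1 θ2 φ1 φ2), P3 (fun r θ φ => (r ^ 2 / R1 ^ 2 - 1) * Real.sin θ * dth R1 R2 θ1 θ2 φ1 φ2 v r θ φ ^ 2) p) - ∫ p in (Bx R1 R2 θ1 θ2 φ1 φ2), P3 (fun r θ φ => (r ^ 2 / R1 ^ 2 - 1) * Real.sin θ * dth R1 R2 θ1 θ2 φ1 φ2 q r θ φ ^ 2) p :=
    integral_sub iA1 iA2
  have hSA2 : (∫ p in (Bx R1 R2 θ1 θ2 φ1 φ2), ((P3 (fun r θ φ => (r ^ 2 / R1 ^ 2 - 1) * Real.sin θ * dth R1 R2 θ1 θ2 φ1 φ2 v r θ φ ^ 2) p - P3 (fun r θ φ => (r ^ 2 / R1 ^ 2 - 1) * Real.sin θ * dth R1 R2 θ1 θ2 φ1 φ2 q r θ φ ^ 2) p) + P3 (fun r θ φ => (r ^ 2 / R1 ^ 2 - 1) * Real.sin θ * dth R1 R2 θ1 θ2 φ1 φ2 w r θ φ ^ 2) p))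
      = (∫ p in (Bx R1 R2 θ1 θ2 φ1 φ2), (P3 (fun r θ φ => (r ^ 2 / R1 ^ 2 - 1) * Real.sin θ * dth R1 R2 θ1 θ2 φ1 φ2 v r θ φ ^ 2) p - P3 (fun r θ φ => (r ^ 2 / R1 ^ 2 - 1) * Real.sin θ * dth R1 R2 θ1 θ2 φ1 φ2 q r θ φ ^ 2) p)) + ∫ p in (Bx R1 R2 θ1 θ2 φ1 φ2), P3 (fun r θ φ => (r ^ 2 / R1 ^ 2 - 1) * Real.sin θ * dth R1 R2 θ1 θ2 φ1 φ2 w r θ φ ^ 2) p :=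
    integral_add (iA1.sub iA2) iA3
  have hSB1 : (∫ p in (Bx R1 R2 θ1 θ2 φ1 φ2), (P3 (fun r θ φ => r ^ 2 * Real.sin θ * (1 / (R1 ^ 2 * Real.sin θ1 ^ 2) - 1 / (r ^ 2 * Real.sin θ ^ 2)) * dph R1 R2 θ1 θ2 φ1 φ2 v r θ φ ^ 2) p - P3 (fun r θ φ => r ^ 2 * Real.sin θ * (1 / (R1 ^ 2 * Real.sin θ1 ^ 2) - 1 / (r ^ 2 * Real.sin θ ^ 2)) * dph R1 R2 θ1 θ2 φ1 φ2 q r θ φ ^ 2) p))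
      = (∫ p in (Bx R1 R2 θ1 θ2 φ1 φ2), P3 (fun r θ φ => r ^ 2 * Real.sin θ * (1 / (R1 ^ 2 * Real.sin θ1 ^ 2) - 1 / (r ^ 2 * Real.sin θ ^ 2)) * dph R1 R2 θ1 θ2 φ1 φ2 v r θ φ ^ 2) p) - ∫ p in (Bx R1 R2 θ1 θ2 φ1 φ2), P3 (fun r θ φ => r ^ 2 * Real.sin θ * (1 / (R1 ^ 2 * Real.sin θ1 ^ 2) - 1 / (r ^ 2 * Real.sin θ ^ 2)) * dph R1 R2 θ1 θ2 φ1 φ2 q r θ φ ^ 2) p :=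
    integral_sub iB1 iB2
  have hSB2 : (∫ p in (Bx R1 R2 θ1 θ2 φ1 φ2), ((P3 (fun r θ φ => r ^ 2 * Real.sin θ * (1 / (R1 ^ 2 * Real.sin θ1 ^ 2) - 1 / (r ^ 2 * Real.sin θ ^ 2)) * dph R1 R2 θ1 θ2 φ1 φ2 v r θ φ ^ 2) p - P3 (fun r θ φ => r ^ 2 * Real.sin θ * (1 / (R1 ^ 2 * Real.sin θ1 ^ 2) - 1 / (r ^ 2 * Real.sin θ ^ 2)) * dph R1 R2 θ1 θ2 φ1 φ2 q r θ φ ^ 2) p) + P3 (fun r θ φ => r ^ 2 * Real.sin θ * (1 / (R1 ^ 2 * Real.sin θ1 ^ 2) - 1 / (r ^ 2 * Real.sin θ ^ 2)) * dph R1 R2 θ1 θ2 φ1 φ2 w r θ φ ^ 2) p))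
      = (∫ p in (Bx R1 R2 θ1 θ2 φ1 φ2), (P3 (fun r θ φ => r ^ 2 * Real.sin θ * (1 / (R1 ^ 2 * Real.sin θ1 ^ 2) - 1 / (r ^ 2 * Real.sin θ ^ 2)) * dph R1 R2 θ1 θ2 φ1 φ2 v r θ φ ^ 2) p - P3 (fun r θ φ => r ^ 2 * Real.sin θ * (1 / (R1 ^ 2 * Real.sin θ1 ^ 2) - 1 / (r ^ 2 * Real.sin θ ^ 2)) * dph R1 R2 θ1 θ2 φ1 φ2 q r θ φ ^ 2) p)) + ∫ p in (Bx R1 R2 θ1 θ2 φ1 φ2), P3 (fun r θ φ => r ^ 2 * Real.sin θ * (1 / (R1 ^ 2 * Real.sin θ1 ^ 2) - 1 / (r ^ 2 * Real.sin θ ^ 2)) * dph R1 R2 θ1 θ2 φ1 φ2 w r θ φ ^ 2) p :=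
    integral_add (iB1.sub iB2) iB3
  have hSG : (∫ p in (Bx R1 R2 θ1 θ2 φ1 φ2), (P3 (fun r θ φ => (r ^ 2 / R1 ^ 2 - 1) * (Real.sin θ * dth R1 R2 θ1 θ2 φ1 φ2 w r θ φ * dth R1 R2 θ1 θ2 φ1 φ2 v r θ φ)) p + P3 (fun r θ φ => (r ^ 2 * Real.sin θ * (1 / (R1 ^ 2 * Real.sin θ1 ^ 2) - 1 / (r ^ 2 * Real.sin θ ^ 2))) * (dph R1 R2 θ1 θ2 φ1 φ2 w r θ φ * dph R1 R2 θ1 θ2 φ1 φ2 v r θ φ)) p))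
      = (∫ p in (Bx R1 R2 θ1 θ2 φ1 φ2), P3 (fun r θ φ => (r ^ 2 / R1 ^ 2 - 1) * (Real.sin θ * dth R1 R2 θ1 θ2 φ1 φ2 w r θ φ * dth R1 R2 θ1 θ2 φ1 φ2 v r θ φ)) p) + ∫ p in (Bx R1 R2 θ1 θ2 φ1 φ2), P3 (fun r θ φ => (r ^ 2 * Real.sin θ * (1 / (R1 ^ 2 * Real.sin θ1 ^ 2) - 1 / (r ^ 2 * Real.sin θ ^ 2))) * (dph R1 R2 θ1 θ2 φ1 φ2 w r θ φ * dph R1 R2 θ1 θ2 φ1 φ2 v r θ φ)) p :=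
    integral_add iG1 iG2
  have hhalf : (∫ p in (Bx R1 R2 θ1 θ2 φ1 φ2), (1 / 2 * (P3 (fun r θ φ => (r ^ 2 / R1 ^ 2 - 1) * (Real.sin θ * dth R1 R2 θ1 θ2 φ1 φ2 w r θ φ * dth R1 R2 θ1 θ2 φ1 φ2 v r θ φ)) p + P3 (fun r θ φ => (r ^ 2 * Real.sin θ * (1 / (R1 ^ 2 * Real.sin θ1 ^ 2) - 1 / (r ^ 2 * Real.sin θ ^ 2))) * (dph R1 R2 θ1 θ2 φ1 φ2 w r θ φ * dph R1 R2 θ1 θ2 φ1 φ2 v r θ φ)) p)))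
      = 1 / 2 * ∫ p in (Bx R1 R2 θ1 θ2 φ1 φ2), (P3 (fun r θ φ => (r ^ 2 / R1 ^ 2 - 1) * (Real.sin θ * dth R1 R2 θ1 θ2 φ1 φ2 w r θ φ * dth R1 R2 θ1 θ2 φ1 φ2 v r θ φ)) p + P3 (fun r θ φ => (r ^ 2 * Real.sin θ * (1 / (R1 ^ 2 * Real.sin θ1 ^ 2) - 1 / (r ^ 2 * Real.sin θ ^ 2))) * (dph R1 R2 θ1 θ2 φ1 φ2 w r θ φ * dph R1 R2 θ1 θ2 φ1 φ2 v r θ φ)) p) := integral_const_mul _ _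
  have hq1 : (∫ p in (Bx R1 R2 θ1 θ2 φ1 φ2), (1 / 4 * ((P3 (fun r θ φ => (r ^ 2 / R1 ^ 2 - 1) * Real.sin θ * dth R1 R2 θ1 θ2 φ1 φ2 v r θ φ ^ 2) p - P3 (fun r θ φ => (r ^ 2 / R1 ^ 2 - 1) * Real.sin θ * dth R1 R2 θ1 θ2 φ1 φ2 q r θ φ ^ 2) p) + P3 (fun r θ φ => (r ^ 2 / R1 ^ 2 - 1) * Real.sin θ * dth R1 R2 θ1 θ2 φ1 φ2 w r θ φ ^ 2) p)))
      = 1 / 4 * ∫ p in (Bx R1 R2 θ1 θ2 φ1 φ2), ((P3 (fun r θ φ => (r ^ 2 / R1 ^ 2 - 1) * Real.sin θ * dth R1 R2 θ1 θ2 φ1 φ2 v r θ φ ^ 2) p - P3 (fun r θ φ => (r ^ 2 / R1 ^ 2 - 1) * Real.sin θ * dth R1 R2 θ1 θ2 φ1 φ2 q r θ φ ^ 2) p) + P3 (fun r θ φ => (r ^ 2 / R1 ^ 2 - 1) * Real.sin θ * dth R1 R2 θ1 θ2 φ1 φ2 w r θ φ ^ 2) p) :=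
    integral_const_mul _ _
  have hq2 : (∫ p in (Bx R1 R2 θ1 θ2 φ1 φ2), (1 / 4 * ((P3 (fun r θ φ => r ^ 2 * Real.sin θ * (1 / (R1 ^ 2 * Real.sin θ1 ^ 2) - 1 / (r ^ 2 * Real.sin θ ^ 2)) * dph R1 R2 θ1 θ2 φ1 φ2 v r θ φ ^ 2) p - P3 (fun r θ φ => r ^ 2 * Real.sin θ * (1 / (R1 ^ 2 * Real.sin θ1 ^ 2) - 1 / (r ^ 2 * Real.sin θ ^ 2)) * dph R1 R2 θ1 θ2 φ1 φ2 q r θ φ ^ 2) p) + P3 (fun r θ φ => r ^ 2 * Real.sin θ * (1 / (R1 ^ 2 * Real.sin θ1 ^ 2) - 1 / (r ^ 2 * Real.sin θ ^ 2)) * dph R1 R2 θ1 θ2 φ1 φ2 w r θ φ ^ 2) p)))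
      = 1 / 4 * ∫ p in (Bx R1 R2 θ1 θ2 φ1 φ2), ((P3 (fun r θ φ => r ^ 2 * Real.sin θ * (1 / (R1 ^ 2 * Real.sin θ1 ^ 2) - 1 / (r ^ 2 * Real.sin θ ^ 2)) * dph R1 R2 θ1 θ2 φ1 φ2 v r θ φ ^ 2) p - P3 (fun r θ φ => r ^ 2 * Real.sin θ * (1 / (R1 ^ 2 * Real.sin θ1 ^ 2) - 1 / (r ^ 2 * Real.sin θ ^ 2)) * dph R1 R2 θ1 θ2 φ1 φ2 q r θ φ ^ 2) p) + P3 (fun r θ φ => r ^ 2 * Real.sin θ * (1 / (R1 ^ 2 * Real.sin θ1 ^ 2) - 1 / (r ^ 2 * Real.sin θ ^ 2)) * dph R1 R2 θ1 θ2 φ1 φ2 w r θ φ ^ 2) p) :=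
    integral_const_mul _ _
  have hqsum : (∫ p in (Bx R1 R2 θ1 θ2 φ1 φ2),
        (1 / 4 * ((P3 (fun r θ φ => (r ^ 2 / R1 ^ 2 - 1) * Real.sin θ * dth R1 R2 θ1 θ2 φ1 φ2 v r θ φ ^ 2) p - P3 (fun r θ φ => (r ^ 2 / R1 ^ 2 - 1) * Real.sin θ * dth R1 R2 θ1 θ2 φ1 φ2 q r θ φ ^ 2) p) + P3 (fun r θ φ => (r ^ 2 / R1 ^ 2 - 1) * Real.sin θ * dth R1 R2 θ1 θ2 φ1 φ2 w r θ φ ^ 2) p)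
          + 1 / 4 * ((P3 (fun r θ φ => r ^ 2 * Real.sin θ * (1 / (R1 ^ 2 * Real.sin θ1 ^ 2) - 1 / (r ^ 2 * Real.sin θ ^ 2)) * dph R1 R2 θ1 θ2 φ1 φ2 v r θ φ ^ 2) p - P3 (fun r θ φ => r ^ 2 * Real.sin θ * (1 / (R1 ^ 2 * Real.sin θ1 ^ 2) - 1 / (r ^ 2 * Real.sin θ ^ 2)) * dph R1 R2 θ1 θ2 φ1 φ2 q r θ φ ^ 2) p) + P3 (fun r θ φ => r ^ 2 * Real.sin θ * (1 / (R1 ^ 2 * Real.sin θ1 ^ 2) - 1 / (r ^ 2 * Real.sin θ ^ 2)) * dph R1 R2 θ1 θ2 φ1 φ2 w r θ φ ^ 2) p)))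
      = (∫ p in (Bx R1 R2 θ1 θ2 φ1 φ2), (1 / 4 * ((P3 (fun r θ φ => (r ^ 2 / R1 ^ 2 - 1) * Real.sin θ * dth R1 R2 θ1 θ2 φ1 φ2 v r θ φ ^ 2) p - P3 (fun r θ φ => (r ^ 2 / R1 ^ 2 - 1) * Real.sin θ * dth R1 R2 θ1 θ2 φ1 φ2 q r θ φ ^ 2) p) + P3 (fun r θ φ => (r ^ 2 / R1 ^ 2 - 1) * Real.sin θ * dth R1 R2 θ1 θ2 φ1 φ2 w r θ φ ^ 2) p)))
        + ∫ p in (Bx R1 R2 θ1 θ2 φ1 φ2), (1 / 4 * ((P3 (fun r θ φ => r ^ 2 * Real.sin θ * (1 / (R1 ^ 2 * Real.sin θ1 ^ 2) - 1 / (r ^ 2 * Real.sin θ ^ 2)) * dph R1 R2 θ1 θ2 φ1 φ2 v r θ φ ^ 2) p - P3 (fun r θ φ => r ^ 2 * Real.sin θ * (1 / (R1 ^ 2 * Real.sin θ1 ^ 2) - 1 / (r ^ 2 * Real.sin θ ^ 2)) * dph R1 R2 θ1 θ2 φ1 φ2 q r θ φ ^ 2) p) + P3 (fun r θ φ => r ^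 2 * Real.sin θ * (1 / (R1 ^ 2 * Real.sin θ1 ^ 2) - 1 / (r ^ 2 * Real.sin θ ^ 2)) * dph R1 R2 θ1 θ2 φ1 φ2 w r θ φ ^ 2) p)) :=
    integral_add (((iA1.sub iA2).add iA3).const_mul _) (((iB1.sub iB2).add iB3).const_mul _)
  have hfinal : (∫ p in (Bx R1 R2 θ1 θ2 φ1 φ2), (1 / 2 * (P3 (fun r θ φ => (r ^ 2 / R1 ^ 2 - 1) * (Real.sin θ * dth R1 R2 θ1 θ2 φ1 φ2 w r θ φ * dth R1 R2 θ1 θ2 φ1 φ2 v r θ φ)) p + P3 (fun r θ φ => (r ^ 2 * Real.sin θ * (1 / (R1 ^ 2 * Real.sin θ1 ^ 2) - 1 / (r ^ 2 * Real.sin θ ^ 2))) * (dph R1 R2 θ1 θ2 φ1 φ2 w r θ φ * dph R1 R2 θ1 θ2 φ1 φ2 v r θ φ)) p)))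
      = ∫ p in (Bx R1 R2 θ1 θ2 φ1 φ2),
          (1 / 4 * ((P3 (fun r θ φ => (r ^ 2 / R1 ^ 2 - 1) * Real.sin θ * dth R1 R2 θ1 θ2 φ1 φ2 v r θ φ ^ 2) p - P3 (fun r θ φ => (r ^ 2 / R1 ^ 2 - 1) * Real.sin θ * dth R1 R2 θ1 θ2 φ1 φ2 q r θ φ ^ 2) p) + P3 (fun r θ φ => (r ^ 2 / R1 ^ 2 - 1) * Real.sin θ * dth R1 R2 θ1 θ2 φ1 φ2 w r θ φ ^ 2) p)
            + 1 / 4 * ((P3 (fun r θ φ => r ^ 2 * Real.sin θ * (1 / (R1 ^ 2 * Real.sin θ1 ^ 2) - 1 / (r ^ 2 * Real.sin θ ^ 2)) * dph R1 R2 θ1 θ2 φ1 φ2 v r θ φ ^ 2) p - P3 (fun r θ φ => r ^ 2 * Real.sin θ * (1 / (R1 ^ 2 * Real.sin θ1 ^ 2) - 1 / (r ^ 2 * Real.sin θ ^ 2)) * dph R1 R2 θ1 θ2 φ1 φ2 q r θ φ ^ 2) p) + P3 (fun r θ φ => r ^ 2 * Real.sin θ * (1 / (R1 ^ 2 * Real.sin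 θ1 ^ 2) - 1 / (r ^ 2 * Real.sin θ ^ 2)) * dph R1 R2 θ1 θ2 φ1 φ2 w r θ φ ^ 2) p)) := by
    apply setIntegral_congr_fun measurable_Bx
    intro p hp
    obtain ⟨r, θ, φ⟩ := p
    simp only [P3, dth, dph]
    rw [lin_d hRR hθθ hφv hvw hsv hsq hp ((0 : ℝ), (1 : ℝ), (0 : ℝ)),
      lin_d hRR hθθ hφv hvw hsv hsq hp ((0 : ℝ), (0 : ℝ), (1 : ℝ))]
    ring
  linarith [hSA1, hSA2, hSB1, hSB2, hSG, hhalf, hq1, hq2, hqsum, hfinal]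
end TCEI

theorem telescoping_consistency_error_identity
    (R1 R2 θ1 θ2 φ1 φ2 : ℝ)
    (hR1 : 0 < R1) (hRR : R1 < R2)
    (hθ1 : 0 < θ1) (hθθ : θ1 < θ2) (hθ2 : θ2 < Real.pi)
    (hφ : φ1 < φ2)
    (hsin : ∀ θ ∈ Icc θ1 θ2, Real.sin θ1 ≤ Real.sin θ)
    (a b c : ℝ → ℝ → ℝ → ℝ)
    (ha : SmoothOnBox R1 R2 θ1 θ2 φ1 φ2 a) (hb : SmoothOnBox R1 R2 θ1 θ2 φ1 φ2 b) (hc : SmoothOnBox R1 R2 θ1 θ2 φ1 φ2 c)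
    (ha0 : VanishOnBdry R1 R2 θ1 θ2 φ1 φ2 a) (hb0 : VanishOnBdry R1 R2 θ1 θ2 φ1 φ2 b) (hc0 : VanishOnBdry R1 R2 θ1 θ2 φ1 φ2 c) :
    1 / 2 * ipw R1 R2 θ1 θ2 φ1 φ2
        (fun r θ φ => lap (fun r' θ' φ' => a r' θ' φ' - 2 * b r' θ' φ' + c r' θ' φ') r θ φ
          - laph R1 θ1 (fun r' θ' φ' => a r' θ' φ' - 2 * b r' θ' φ' + c r' θ' φ') r θ φ)
        (fun r θ φ => a r θ φ - b r θ φ)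
    = 1 / 4 * (wnorm R1 R2 θ1 θ2 φ1 φ2 (fun r θ => (r ^ 2 / R1 ^ 2 - 1) * Real.sin θ) (pt (fun r θ φ => a r θ φ - b r θ φ))
          - wnorm R1 R2 θ1 θ2 φ1 φ2 (fun r θ => (r ^ 2 / R1 ^ 2 - 1) * Real.sin θ) (pt (fun r θ φ => b r θ φ - c r θ φ))
          + wnorm R1 R2 θ1 θ2 φ1 φ2 (fun r θ => (r ^ 2 / R1 ^ 2 - 1) * Real.sin θ) (pt (fun r θ φ => a r θ φ - 2 * b r θ φ + c r θ φ)))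
      + 1 / 4 * (wnorm R1 R2 θ1 θ2 φ1 φ2 (fun r θ => r ^ 2 * Real.sin θ * (1 / (R1 ^ 2 * Real.sin θ1 ^ 2) - 1 / (r ^ 2 * Real.sin θ ^ 2))) (pp (fun r θ φ => a r θ φ - b r θ φ))
          - wnorm R1 R2 θ1 θ2 φ1 φ2 (fun r θ => r ^ 2 * Real.sin θ * (1 / (R1 ^ 2 * Real.sin θ1 ^ 2) - 1 / (r ^ 2 * Real.sin θ ^ 2))) (pp (fun r θ φ => b r θ φ - c r θ φ))
          + wnorm R1 R2 θ1 θ2 φ1 φ2 (fun r θ => r ^ 2 * Real.sin θ * (1 / (R1 ^ 2 * Real.sin θ1 ^ 2) - 1 / (r ^ 2 * Real.sin θ ^ 2))) (pp (fun r θ φ => a r θ φ - 2 * b r θ φ + c r θ φ))) := by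
  have hvw : ∀ r θ φ, (fun r θ φ => a r θ φ - 2 * b r θ φ + c r θ φ) r θ φ
      = (fun r θ φ => a r θ φ - b r θ φ) r θ φ - (fun r θ φ => b r θ φ - c r θ φ) r θ φ := by
    intro r θ φ; simp only; ring
  have hsv : ContDiffOn ℝ (⊤ : ℕ∞) (TCEI.P3 (fun r θ φ => a r θ φ - b r θ φ))
      (TCEI.Bx R1 R2 θ1 θ2 φ1 φ2) := (ha.sub hb).of_le (by simp)
  have hsq : ContDiffOn ℝ (⊤ : ℕ∞) (TCEI.P3 (fun r θ φ => b r θ φ - c r θ φ))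
      (TCEI.Bx R1 R2 θ1 θ2 φ1 φ2) := (hb.sub hc).of_le (by simp)
  have hv0 : VanishOnBdry R1 R2 θ1 θ2 φ1 φ2 (fun r θ φ => a r θ φ - b r θ φ) := by
    intro p hp
    simp only
    rw [ha0 p hp, hb0 p hp, sub_zero]
  have hq0 : VanishOnBdry R1 R2 θ1 θ2 φ1 φ2 (fun r θ φ => b r θ φ - c r θ φ) := by
    intro p hp
    simp only
    rw [hb0 p hp, hc0 p hp, sub_zero]
  exact TCEI.master hR1 hRR hθ1 hθθ hθ2 hφ _ _ _ hvw hsv hsq hv0 hq0
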